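/- For every r ∈ ℝ^d, r ∈ P_r, and moreover r ∈ D_d^{(0)} if and only if P_r ⊆ D_d^{(0)}. -/
import Mathlib


open scoped BigOperators

/-- Inner product of a real parameter vector with an integer vector. -/
noncomputable def dotp {d : ℕ} (r : Fin d → ℝ) (a : Fin d → ℤ) : ℝ := ∑ j, r j * (a j : ℝ)

/-- The shift radix system map τ_r. -/
noncomputable def tau {d : ℕ} (r : Fin d → ℝ) (a : Fin d → ℤ) : Fin d → ℤ :=
  fun i => if h : (i : ℕ) + 1 < d then a ⟨(i : ℕ) + 1, h⟩ else -⌊dotp r a⌋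

/-- τ_r^* := -τ_r ∘ (-id). -/
noncomputable def tauStar {d : ℕ} (r : Fin d → ℝ) (a : Fin d → ℤ) : Fin d → ℤ :=
  -(tau r (-a))

/-- D_d^{(0)}: parameters with the finiteness property. -/
def D0 (d : ℕ) : Set (Fin d → ℝ) :=
  {r | ∀ a : Fin d → ℤ, ∃ n : ℕ, (tau r)^[n] a = 0}

/-- D_d: parameters with all orbits eventually periodic. -/
def Dset (d : ℕ) : Set (Fin d → ℝ) :=
  {r | ∀ a : Fin d → ℤ, ∃ m n : ℕ, m ≠ n ∧ (tau r)^[m] a = (tau r)^[n] a}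

/-- The iteration producing the set of witnesses. -/
def Vseq {d : ℕ} (r : Fin d → ℝ) : ℕ → Set (Fin d → ℤ)
  | 0 => {v | ∃ j : Fin d, v = Pi.single j 1 ∨ v = -Pi.single j 1}
  | n + 1 => Vseq r n ∪ (tau r '' Vseq r n) ∪ (tauStar r '' Vseq r n)

/-- The set of witnesses associated with r. -/
def Vr {d : ℕ} (r : Fin d → ℝ) : Set (Fin d → ℤ) := ⋃ n, Vseq r n

/-- The polyhedron P_r of parameters acting like r on the witnesses of r. -/
def Pr {d : ℕ} (r : Fin d → ℝ) : Set (Fin d → ℝ) :=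
  {s | ∀ a ∈ Vr r, tau s a = tau r a ∧ tauStar s a = tauStar r a}

-- auxiliary lemmas

lemma dotp_zero {d : ℕ} (r : Fin d → ℝ) : dotp r 0 = 0 := by
  simp [dotp]

lemma tau_zero {d : ℕ} (r : Fin d → ℝ) : tau r 0 = 0 := by
  funext i
  simp [tau, dotp]

lemma tau_iterate_zero {d : ℕ} (r : Fin d → ℝ) (n : ℕ) : (tau r)^[n] (0 : Fin d → ℤ) = 0 := by
  induction n with
  | zero => rfl
  | succ n ih => rw [Function.iterate_succ_apply', ih, tau_zero]

lemma mem_Vr_tau {d : ℕ} {r : Fin d → ℝ} {a : Fin d → ℤ} (h : a ∈ Vr r) : tau r a ∈ Vr r := by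
  obtain ⟨S, ⟨n, rfl⟩, hS⟩ := h
  exact Set.mem_iUnion.2 ⟨n + 1, Or.inl (Or.inr ⟨a, hS, rfl⟩)⟩

lemma mem_Vr_tauStar {d : ℕ} {r : Fin d → ℝ} {a : Fin d → ℤ} (h : a ∈ Vr r) : tauStar r a ∈ Vr r := by
  obtain ⟨S, ⟨n, rfl⟩, hS⟩ := h
  exact Set.mem_iUnion.2 ⟨n + 1, Or.inr ⟨a, hS, rfl⟩⟩

lemma mem_Vr_single {d : ℕ} (r : Fin d → ℝ) (j : Fin d) : (Pi.single j 1 : Fin d → ℤ) ∈ Vr r :=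
  Set.mem_iUnion.2 ⟨0, ⟨j, Or.inl rfl⟩⟩

lemma mem_Vr_neg_single {d : ℕ} (r : Fin d → ℝ) (j : Fin d) : (-Pi.single j 1 : Fin d → ℤ) ∈ Vr r :=
  Set.mem_iUnion.2 ⟨0, ⟨j, Or.inr rfl⟩⟩

lemma floor_split (x y : ℝ) : ⌊x + y⌋ = ⌊x⌋ + ⌊y⌋ ∨ ⌊x + y⌋ = ⌊x⌋ + ⌈y⌉ := by
  by_cases hy : ∃ m : ℤ, y = m
  · obtain ⟨m, rfl⟩ := hy
    left; rw [Int.floor_add_intCast, Int.floor_intCast]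
  · have hfl : (⌊y⌋ : ℝ) < y := by
      rcases lt_or_eq_of_le (Int.floor_le y) with h | h
      · exact h
      · exact absurd ⟨⌊y⌋, h.symm⟩ hy
    have h1 : ⌊y⌋ < ⌈y⌉ := by
      have := Int.le_ceil y
      exact_mod_cast hfl.trans_le this
    have h2 : ⌈y⌉ ≤ ⌊y⌋ + 1 := Int.ceil_le_floor_add_one y
    have h3 : ⌊x⌋ + ⌊y⌋ ≤ ⌊x + y⌋ := by
      apply Int.le_floor.2
      push_cast
      exact add_le_add (Int.floor_le x) (Int.floor_le y)
    have h4 : ⌊x + y⌋ < ⌊x⌋ + ⌊y⌋ + 2 := by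
      apply Int.floor_lt.2
      push_cast
      have := Int.lt_floor_add_one x
      have := Int.lt_floor_add_one y
      linarith
    omega

lemma dotp_add {d : ℕ} (s : Fin d → ℝ) (a v : Fin d → ℤ) :
    dotp s (a + v) = dotp s a + dotp s v := by
  simp [dotp, mul_add, Finset.sum_add_distrib]

lemma dotp_neg {d : ℕ} (s : Fin d → ℝ) (v : Fin d → ℤ) : dotp s (-v) = -dotp s v := by
  simp [dotp, Finset.sum_neg_distrib]

lemma tau_add_split {d : ℕ} (s : Fin d → ℝ) (a v : Fin d → ℤ) :
    tau s (a + v) = tau s a + tau s v ∨ tau s (a + v) = tau s a + tauStar s v := by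
  have key : -⌊dotp s (a + v)⌋ = -⌊dotp s a⌋ + -⌊dotp s v⌋ ∨
      -⌊dotp s (a + v)⌋ = -⌊dotp s a⌋ + ⌊-dotp s v⌋ := by
    rw [dotp_add]
    rcases floor_split (dotp s a) (dotp s v) with h | h
    · left; omega
    · right; rw [Int.floor_neg]; omega
  rcases key with h | h
  · left; funext i
    by_cases hi : (i : ℕ) + 1 < d
    · simp [tau, hi]
    · simpa [tau, hi] using h
  · right; funext i
    by_cases hi : (i : ℕ) + 1 < d
    · simp [tau, tauStar, hi]
    · simpa [tau, tauStar, hi, dotp_neg] using h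

lemma iter_split {d : ℕ} {r s : Fin d → ℝ} (hs : s ∈ Pr r) (b : Fin d → ℤ) {v : Fin d → ℤ}
    (hv : v ∈ Vr r) (n : ℕ) :
    ∃ w ∈ Vr r, (tau s)^[n] (b + v) = (tau s)^[n] b + w := by
  induction n with
  | zero => exact ⟨v, hv, rfl⟩
  | succ n ih =>
    obtain ⟨w, hw, he⟩ := ih
    rw [Function.iterate_succ_apply', Function.iterate_succ_apply', he]
    rcases tau_add_split s ((tau s)^[n] b) w with h | h
    · exact ⟨tau s w, by rw [(hs w hw).1]; exact mem_Vr_tau hw, h⟩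
    · exact ⟨tauStar s w, by rw [(hs w hw).2]; exact mem_Vr_tauStar hw, h⟩

lemma iter_Vr {d : ℕ} {r s : Fin d → ℝ} (hs : s ∈ Pr r) {w : Fin d → ℤ} (hw : w ∈ Vr r) (k : ℕ) :
    (tau s)^[k] w = (tau r)^[k] w ∧ (tau r)^[k] w ∈ Vr r := by
  induction k with
  | zero => exact ⟨rfl, hw⟩
  | succ k ih =>
    refine ⟨?_, by rw [Function.iterate_succ_apply']; exact mem_Vr_tau ih.2⟩
    rw [Function.iterate_succ_apply', Function.iterate_succ_apply', ih.1, (hs _ ih.2).1]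

lemma main_lemma {d : ℕ} {r s : Fin d → ℝ} (hr : r ∈ D0 d) (hs : s ∈ Pr r) :
    ∀ (m : ℕ) (a : Fin d → ℤ), (∑ j, (a j).natAbs) ≤ m → ∃ N, (tau s)^[N] a = 0 := by
  intro m
  induction m with
  | zero =>
    intro a ha
    have : a = 0 := by
      funext j
      have := Finset.sum_eq_zero_iff.mp (Nat.le_zero.mp ha) j (Finset.mem_univ j)
      simp only [Pi.zero_apply]
      omega
    exact ⟨0, this⟩
  | succ m ih =>
    intro a ha
    by_cases h0 : a = 0
    · exact ⟨0, h0⟩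
    · obtain ⟨j, hj⟩ := Function.ne_iff.mp h0
      set v : Fin d → ℤ := if 0 < a j then Pi.single j 1 else -Pi.single j 1 with hv
      have hvV : v ∈ Vr r := by
        rw [hv]; split
        · exact mem_Vr_single r j
        · exact mem_Vr_neg_single r j
      set b : Fin d → ℤ := a - v with hb
      have hvj : ∀ i : Fin d, v i = if i = j then (if 0 < a j then 1 else -1) else 0 := by
        intro i
        rw [hv]
        split <;> simp [Pi.single_apply] <;> split <;> simp
      have hj' : a j ≠ 0 := by simpa using hj
      have hle : ∀ i : Fin d, (b i).natAbs ≤ (a i).natAbs := by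
        intro i
        have hvi := hvj i
        simp only [hb, Pi.sub_apply]
        rcases eq_or_ne i j with rfl | hne
        · rw [hvi, if_pos rfl]
          split_ifs <;> omega
        · rw [hvi, if_neg hne]
          omega
      have hlt : (b j).natAbs < (a j).natAbs := by
        have hvi := hvj j
        simp only [hb, Pi.sub_apply]
        rw [hvi]
        simp only [if_pos rfl]
        split_ifs <;> omega
      have hsum : ∑ i, (b i).natAbs < ∑ i, (a i).natAbs :=
        Finset.sum_lt_sum (fun i _ => hle i) ⟨j, Finset.mem_univ j, hlt⟩
      obtain ⟨N, hN⟩ := ih b (by omega)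
      obtain ⟨w, hwV, hw⟩ := iter_split hs b hvV N
      have hba : b + v = a := by rw [hb]; ring
      rw [hba, hN, zero_add] at hw
      obtain ⟨k, hk⟩ := hr w
      refine ⟨k + N, ?_⟩
      rw [Function.iterate_add_apply, hw, (iter_Vr hs hwV k).1, hk]


theorem stmt7 {d : ℕ} (r : Fin d → ℝ) :
    r ∈ Pr r ∧ (r ∈ D0 d ↔ Pr r ⊆ D0 d) := by
  have hrP : r ∈ Pr r := fun a _ => ⟨rfl, rfl⟩
  refine ⟨hrP, ⟨fun hr s hs a => main_lemma hr hs _ a le_rfl, fun h => h hrP⟩⟩
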